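/- Let h > 0 and t ∈ ℝ, and set t_j = t + j·h for j = −2, −1, 0, 1, 2. Let p₁, p₂, p₃, p₄ be real polynomials of degree at most 5 such that for every r = 0, 1, 2, 3, 4: the r-th derivatives of p₁ and p₂ agree at t₋₁, the r-th derivatives of p₂ and p₃ agree at t₀, and the r-th derivatives of p₃ and p₄ agree at t₁. Then p₁''''(t₋₂) + 26·p₂''''(t₋₁) + 66·p₃''''(t₀) + 26·p₄''''(t₁) + p₄''''(t₂) = (120/h⁴)·(p₁(t₋₂) − 4·p₂(t₋₁) + 6·p₃(t₀) − 4·p₄(t₁) + p₄(t₂)). -/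

import Mathlib

/-!
Two quintics whose derivatives of order `≤ 4` agree at a knot `s` differ by `c (x - s)⁵`, so the
pieces are `p₁` plus multiples of `(x - t₋₁)⁵`, `(x - t₀)⁵`, `(x - t₁)⁵`, each switched on from
its knot onwards. Both sides of the identity are linear in these data. On the common quintic `p₁`
the identity is the exactness of the stencil on quintics; on each jump term it is a direct
computation, the term and its fourth derivative vanishing at its own knot.
-/

open Polynomial

namespace Polynomial

section CharZero

variable {R : Type*} [CommRing R] [IsDomain R] [CharZero R]

theorem eq_C_mul_X_sub_C_pow_of_iterate_derivative_eval_eq_zero {q : R[X]} {n : ℕ} {s : R}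
    (hq : q.natDegree ≤ n) (h : ∀ r < n, (derivative^[r] q).eval s = 0) :
    ∃ c, q = C c * (X - C s) ^ n := by
  rcases eq_or_ne q 0 with rfl | hq0
  · exact ⟨0, by simp⟩
  obtain ⟨u, rfl⟩ : (X - C s) ^ n ∣ q := by
    rw [← le_rootMultiplicity_iff hq0]
    cases n with
    | zero => exact Nat.zero_le _
    | succ m =>
      exact (lt_rootMultiplicity_iff_isRoot_iterate_derivative hq0).mpr fun r hr =>
        h r (Nat.lt_succ_of_le hr)
  have hu : u.natDegree = 0 := by
    rw [((monic_X_sub_C s).pow n).natDegree_mul' (right_ne_zero_of_mul hq0),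
      natDegree_pow, natDegree_X_sub_C] at hq
    omega
  exact ⟨u.coeff 0, by rw [mul_comm, ← eq_C_of_natDegree_eq_zero hu]⟩

theorem exists_eq_add_C_mul_X_sub_C_pow_of_iterate_derivative_eval_eq {p q : R[X]} {n : ℕ}
    {s : R} (hp : p.natDegree ≤ n) (hq : q.natDegree ≤ n)
    (h : ∀ r < n, (derivative^[r] p).eval s = (derivative^[r] q).eval s) :
    ∃ c, q = p + C c * (X - C s) ^ n := by
  obtain ⟨c, hc⟩ := eq_C_mul_X_sub_C_pow_of_iterate_derivative_eval_eq_zero (q := q - p)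
    ((natDegree_sub_le q p).trans (max_le hq hp)) fun r hr => by
      rw [iterate_derivative_sub, eval_sub, h r hr, sub_self]
  exact ⟨c, by rw [← hc, add_sub_cancel]⟩

end CharZero

section CommRing

variable {R : Type*} [CommRing R]

theorem eval_iterate_derivative_four_of_natDegree_le_five {p : R[X]} (hp : p.natDegree ≤ 5)
    (x : R) : (derivative^[4] p).eval x = 24 * p.coeff 4 + 120 * p.coeff 5 * x := by
  have hd : (derivative^[4] p).natDegree < 2 := by
    have := natDegree_iterate_derivative p 4
    omega
  simp only [eval_eq_sum_range' hd, Finset.sum_range_succ, Finset.sum_range_zero,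
    coeff_iterate_derivative]
  norm_num [Nat.descFactorial]

theorem eval_iterate_derivative_four_C_mul_X_sub_C_pow_five (c s x : R) :
    (derivative^[4] (C c * (X - C s) ^ 5)).eval x = 120 * c * (x - s) := by
  simp only [iterate_derivative_C_mul, iterate_derivative_X_sub_pow, eval_mul, eval_smul, eval_C,
    eval_pow, eval_sub, eval_X]
  norm_num [Nat.descFactorial]
  ring

theorem quintic_stencil {p : R[X]} (hp : p.natDegree ≤ 5) (t h : R) :
    h ^ 4 * ((derivative^[4] p).eval (t + (-2) * h) + 26 * (derivative^[4] p).eval (t + (-1) * h)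
        + 66 * (derivative^[4] p).eval (t + 0 * h) + 26 * (derivative^[4] p).eval (t + 1 * h)
        + (derivative^[4] p).eval (t + 2 * h))
      = 120 * (p.eval (t + (-2) * h) - 4 * p.eval (t + (-1) * h) + 6 * p.eval (t + 0 * h)
        - 4 * p.eval (t + 1 * h) + p.eval (t + 2 * h)) := by
  have hp6 : p.natDegree < 6 := by omega
  simp only [eval_iterate_derivative_four_of_natDegree_le_five hp, eval_eq_sum_range' hp6,
    Finset.sum_range_succ, Finset.sum_range_zero]
  ring

end CommRing

end Polynomial

theorem quintic_spline_identity_2_12 (h t : ℝ) (hh : 0 < h)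
    (p₁ p₂ p₃ p₄ : Polynomial ℝ)
    (hp₁ : p₁.degree ≤ 5) (hp₂ : p₂.degree ≤ 5)
    (hp₃ : p₃.degree ≤ 5) (hp₄ : p₄.degree ≤ 5)
    (hjoin₁ : ∀ r : ℕ, r ≤ 4 →
      (derivative^[r] p₁).eval (t + (-1 : ℝ) * h) = (derivative^[r] p₂).eval (t + (-1 : ℝ) * h))
    (hjoin₂ : ∀ r : ℕ, r ≤ 4 →
      (derivative^[r] p₂).eval (t + (0 : ℝ) * h) = (derivative^[r] p₃).eval (t + (0 : ℝ) * h))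
    (hjoin₃ : ∀ r : ℕ, r ≤ 4 →
      (derivative^[r] p₃).eval (t + (1 : ℝ) * h) = (derivative^[r] p₄).eval (t + (1 : ℝ) * h)) :
    (derivative^[4] p₁).eval (t + (-2 : ℝ) * h) + 26 * (derivative^[4] p₂).eval (t + (-1 : ℝ) * h)
        + 66 * (derivative^[4] p₃).eval (t + (0 : ℝ) * h) + 26 * (derivative^[4] p₄).eval (t + (1 : ℝ) * h)
        + (derivative^[4] p₄).eval (t + (2 : ℝ) * h)
      = (120 / h ^ 4) * (p₁.eval (t + (-2 : ℝ) * h) - 4 * p₂.eval (t + (-1 : ℝ) * h)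
          + 6 * p₃.eval (t + (0 : ℝ) * h) - 4 * p₄.eval (t + (1 : ℝ) * h) + p₄.eval (t + (2 : ℝ) * h)) := by
  obtain ⟨a, rfl⟩ := exists_eq_add_C_mul_X_sub_C_pow_of_iterate_derivative_eval_eq
    (natDegree_le_of_degree_le hp₁) (natDegree_le_of_degree_le hp₂)
    fun r hr => hjoin₁ r (Nat.le_of_lt_succ hr)
  obtain ⟨b, rfl⟩ := exists_eq_add_C_mul_X_sub_C_pow_of_iterate_derivative_eval_eq
    (natDegree_le_of_degree_le hp₂) (natDegree_le_of_degree_le hp₃)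
    fun r hr => hjoin₂ r (Nat.le_of_lt_succ hr)
  obtain ⟨c, rfl⟩ := exists_eq_add_C_mul_X_sub_C_pow_of_iterate_derivative_eval_eq
    (natDegree_le_of_degree_le hp₃) (natDegree_le_of_degree_le hp₄)
    fun r hr => hjoin₃ r (Nat.le_of_lt_succ hr)
  rw [div_mul_eq_mul_div, eq_div_iff (by positivity)]
  simp only [iterate_map_add, eval_add, eval_iterate_derivative_four_C_mul_X_sub_C_pow_five,
    eval_mul, eval_C, eval_pow, eval_sub, eval_X]
  linear_combination quintic_stencil (natDegree_le_of_degree_le hp₁) t h
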